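/- Let {X_n} be i.i.d., θ = sup{r ≥ 0 : E|X|^r < ∞} with θ < ∞, and θ̂_n = (log n)/(log max_{1≤k≤n}|X_k|). Then θ̂_n → θ in probability if and only if lim_{x→∞} x^r P(|X| > x) = ∞ for all r > θ. -/

import Mathlib

/-!
Write `M_n = max_{k<n} |X_k|` and `G x = P(|X| > x)`. Independence gives
`P(M_n ≤ x) = (1 - G x)^n`, which lies between `1 - n G x` and `exp (-n G x)`, and up to the clamp
in `Log` the event `θ̂_n ≥ c` is the event `M_n ≤ n^{1/c}`. So if `x^c G x → ∞` then
`P(θ̂_n ≥ c) → 0`; conversely, if `P(θ̂_n ≥ c) → 0` then taking `n ≈ x^c` shows that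
`x^c G x` is eventually bounded below, hence `x^r G x → ∞` for every `r > c`. Deviations
`θ̂_n ≤ c < θ` are always negligible: `P(M_n ≥ y) ≤ n P(|X| ≥ y)`, and Markov's inequality with
a finite moment of order `s ∈ (c, θ)` makes this `O(n^{1 - s/c})`.
-/

open MeasureTheory ProbabilityTheory Filter
open scoped ENNReal

/-- `log x = ln (e ∨ x)` as in the paper. -/
noncomputable def Log (x : ℝ) : ℝ := Real.log (max (Real.exp 1) x)

/-- `pmax X n ω = max_{1 ≤ k ≤ n} X_k(ω)` (indexed `0,…,n-1`), junk value at `n = 0`. -/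
noncomputable def pmax {Ω : Type*} (X : ℕ → Ω → ℝ) (n : ℕ) (ω : Ω) : ℝ :=
  if h : n = 0 then X 0 ω
  else (Finset.range n).sup' (Finset.nonempty_range_iff.mpr h) fun k => X k ω

open Topology

lemma exp_Log (x : ℝ) : Real.exp (Log x) = max (Real.exp 1) x :=
  Real.exp_log (lt_max_of_lt_left (Real.exp_pos 1))

lemma one_le_Log (x : ℝ) : 1 ≤ Log x := by
  rw [← Real.exp_le_exp, exp_Log]
  exact le_max_left _ _

lemma Log_pos (x : ℝ) : 0 < Log x :=
  one_pos.trans_le (one_le_Log x)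

lemma Log_mono : Monotone Log := fun _ _ h =>
  Real.log_le_log (lt_max_of_lt_left (Real.exp_pos 1)) (max_le_max le_rfl h)

lemma le_exp_Log (x : ℝ) : x ≤ Real.exp (Log x) :=
  (exp_Log x).symm ▸ le_max_right _ _

lemma Log_of_exp_one_le {x : ℝ} (hx : Real.exp 1 ≤ x) : Log x = Real.log x := by
  rw [Log, max_eq_right hx]

lemma Log_natCast_of_three_le {n : ℕ} (hn : 3 ≤ n) : Log n = Real.log n :=
  Log_of_exp_one_le (Real.exp_one_lt_three.le.trans (by exact_mod_cast hn))

lemma tendsto_Log_atTop : Tendsto Log atTop atTop :=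
  Real.tendsto_log_atTop.comp (tendsto_atTop_mono (le_max_right _) tendsto_id)

section pmax

variable {Ω : Type*} {Y : ℕ → Ω → ℝ} {n : ℕ}

lemma pmax_le_iff (hn : n ≠ 0) {ω : Ω} {x : ℝ} :
    pmax Y n ω ≤ x ↔ ∀ k < n, Y k ω ≤ x := by
  simp [pmax, hn, Finset.sup'_le_iff]

lemma le_pmax_iff (hn : n ≠ 0) {ω : Ω} {x : ℝ} :
    x ≤ pmax Y n ω ↔ ∃ k < n, x ≤ Y k ω := by
  simp [pmax, hn, Finset.le_sup'_iff]

lemma setOf_pmax_le (hn : n ≠ 0) (x : ℝ) :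
    {ω | pmax Y n ω ≤ x} = ⋂ k ∈ Finset.range n, Y k ⁻¹' Set.Iic x := by
  ext ω
  simp [pmax_le_iff hn]

lemma setOf_le_pmax (hn : n ≠ 0) (y : ℝ) :
    {ω | y ≤ pmax Y n ω} = ⋃ k ∈ Finset.range n, Y k ⁻¹' Set.Ici y := by
  ext ω
  simp [le_pmax_iff hn]

end pmax

section iid

variable {Ω : Type*} [MeasurableSpace Ω] {μ : Measure Ω} {Y : ℕ → Ω → ℝ} {n : ℕ}

lemma measureReal_le_pmax_le (hident : ∀ k, IdentDistrib (Y k) (Y 0) μ μ) (hn : n ≠ 0)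
    (y : ℝ) :
    μ.real {ω | y ≤ pmax Y n ω} ≤ n * μ.real {ω | y ≤ Y 0 ω} := by
  rw [setOf_le_pmax hn]
  refine (measureReal_biUnion_finset_le _ _).trans_eq ?_
  simp only [measureReal_def, (hident _).measure_mem_eq measurableSet_Ici, Finset.sum_const,
    Finset.card_range, nsmul_eq_mul]
  rfl

variable [IsProbabilityMeasure μ]

lemma measureReal_pmax_le (hindep : iIndepFun Y μ) (hident : ∀ k, IdentDistrib (Y k) (Y 0) μ μ)
    (hn : n ≠ 0) (x : ℝ) :
    μ.real {ω | pmax Y n ω ≤ x} = (1 - μ.real {ω | x < Y 0 ω}) ^ n := by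
  have hcompl : {ω | x < Y 0 ω} = (Y 0 ⁻¹' Set.Iic x)ᶜ := by
    ext ω
    simp
  have hprod : μ {ω | pmax Y n ω ≤ x} = μ (Y 0 ⁻¹' Set.Iic x) ^ n := by
    rw [setOf_pmax_le hn, hindep.meas_biInter fun k _ => ⟨Set.Iic x, measurableSet_Iic, rfl⟩,
      Finset.prod_congr rfl fun k _ => (hident k).measure_mem_eq measurableSet_Iic,
      Finset.prod_const, Finset.card_range]
  rw [measureReal_def, hprod, ENNReal.toReal_pow, hcompl, probReal_compl_eq_one_sub₀
    ((hident 0).aemeasurable_fst.nullMeasurableSet_preimage measurableSet_Iic), sub_sub_cancel,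
    measureReal_def]

lemma one_sub_mul_le_measureReal_pmax_le (hindep : iIndepFun Y μ)
    (hident : ∀ k, IdentDistrib (Y k) (Y 0) μ μ) (hn : n ≠ 0) (x : ℝ) :
    1 - n * μ.real {ω | x < Y 0 ω} ≤ μ.real {ω | pmax Y n ω ≤ x} := by
  rw [measureReal_pmax_le hindep hident hn, sub_eq_add_neg, sub_eq_add_neg, ← mul_neg]
  exact one_add_mul_le_pow (by linarith [measureReal_le_one (μ := μ) (s := {ω | x < Y 0 ω})]) n

lemma measureReal_pmax_le_le_exp (hindep : iIndepFun Y μ)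
    (hident : ∀ k, IdentDistrib (Y k) (Y 0) μ μ) (hn : n ≠ 0) (x : ℝ) :
    μ.real {ω | pmax Y n ω ≤ x} ≤ Real.exp (-(n * μ.real {ω | x < Y 0 ω})) := by
  rw [measureReal_pmax_le hindep hident hn, ← mul_neg, Real.exp_nat_mul]
  exact pow_le_pow_left₀ (by linarith [measureReal_le_one (μ := μ) (s := {ω | x < Y 0 ω})])
    (Real.one_sub_le_exp_neg _) n

end iid

noncomputable def thetaHat {Ω : Type*} (Y : ℕ → Ω → ℝ) (n : ℕ) (ω : Ω) : ℝ :=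
  Log n / Log (pmax Y n ω)

section thetaHat

variable {Ω : Type*} {Y : ℕ → Ω → ℝ} {n : ℕ} {ω : Ω} {c : ℝ}

lemma thetaHat_pos (Y : ℕ → Ω → ℝ) (n : ℕ) (ω : Ω) : 0 < thetaHat Y n ω :=
  div_pos (Log_pos _) (Log_pos _)

lemma le_thetaHat_of_pmax_le (hc : 0 ≤ c) {x : ℝ} (hx : pmax Y n ω ≤ x)
    (hxn : c * Log x ≤ Log n) : c ≤ thetaHat Y n ω := by
  rw [thetaHat, le_div_iff₀ (Log_pos _)]
  exact (mul_le_mul_of_nonneg_left (Log_mono hx) hc).trans hxn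

lemma pmax_le_of_le_thetaHat (hc : 0 < c) (h : c ≤ thetaHat Y n ω) :
    pmax Y n ω ≤ Real.exp (Log n / c) := by
  rw [thetaHat, le_div_iff₀ (Log_pos _), ← le_div_iff₀' hc] at h
  exact (le_exp_Log _).trans (Real.exp_le_exp.2 h)

lemma exp_le_pmax_of_thetaHat_le (hc : 0 < c) (hcn : c < Log n) (h : thetaHat Y n ω ≤ c) :
    Real.exp (Log n / c) ≤ pmax Y n ω := by
  rw [thetaHat, div_le_iff₀ (Log_pos _), ← div_le_iff₀' hc, ← Real.exp_le_exp, exp_Log] at h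
  have he : Real.exp 1 < Real.exp (Log n / c) := Real.exp_lt_exp.2 ((one_lt_div hc).2 hcn)
  exact (le_max_iff.1 h).resolve_left he.not_ge

end thetaHat

section moments

variable {Ω : Type*} [MeasurableSpace Ω] {μ : Measure Ω} {Z : Ω → ℝ} {s : ℝ}

lemma measureReal_le_le_lintegral_rpow_div (hZ : AEMeasurable Z μ) (hs : 0 ≤ s)
    (hmom : ∫⁻ ω, ENNReal.ofReal (Z ω ^ s) ∂μ < ⊤) {y : ℝ} (hy : 0 < y) :
    μ.real {ω | y ≤ Z ω} ≤ (∫⁻ ω, ENNReal.ofReal (Z ω ^ s) ∂μ).toReal / y ^ s := by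
  have hys : ENNReal.ofReal (y ^ s) ≠ 0 := (ENNReal.ofReal_pos.2 (Real.rpow_pos_of_pos hy s)).ne'
  have hmarkov :
      μ {ω | y ≤ Z ω} ≤ (∫⁻ ω, ENNReal.ofReal (Z ω ^ s) ∂μ) / ENNReal.ofReal (y ^ s) :=
    (measure_mono fun ω (h : y ≤ Z ω) =>
        ENNReal.ofReal_le_ofReal (Real.rpow_le_rpow hy.le h hs)).trans
      (meas_ge_le_lintegral_div (hZ.pow_const s).ennreal_ofReal hys ENNReal.ofReal_ne_top)
  rw [← ENNReal.toReal_ofReal (Real.rpow_pos_of_pos hy s).le, ← ENNReal.toReal_div]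
  exact ENNReal.toReal_mono (ENNReal.div_ne_top hmom.ne hys) hmarkov

lemma lintegral_abs_rpow_lt_top_of_le [IsFiniteMeasure μ] {t : ℝ} (hs : 0 ≤ s) (hst : s ≤ t)
    (ht : ∫⁻ ω, ENNReal.ofReal (|Z ω| ^ t) ∂μ < ⊤) :
    ∫⁻ ω, ENNReal.ofReal (|Z ω| ^ s) ∂μ < ⊤ := by
  have hpow : ∀ ω, |Z ω| ^ s ≤ 1 + |Z ω| ^ t := fun ω => by
    rcases le_total |Z ω| 1 with h | h
    · linarith [Real.rpow_le_one (abs_nonneg (Z ω)) h hs, Real.rpow_nonneg (abs_nonneg (Z ω)) t]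
    · linarith [Real.rpow_le_rpow_of_exponent_le h hst]
  calc ∫⁻ ω, ENNReal.ofReal (|Z ω| ^ s) ∂μ
      ≤ ∫⁻ ω, (1 + ENNReal.ofReal (|Z ω| ^ t)) ∂μ := lintegral_mono fun ω =>
        (ENNReal.ofReal_le_ofReal (hpow ω)).trans_eq
          (by rw [ENNReal.ofReal_add zero_le_one (by positivity), ENNReal.ofReal_one])
    _ = μ Set.univ + ∫⁻ ω, ENNReal.ofReal (|Z ω| ^ t) ∂μ := by
        rw [lintegral_add_left measurable_const, lintegral_const, one_mul]
    _ < ⊤ := ENNReal.add_lt_top.2 ⟨measure_lt_top μ _, ht⟩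

lemma lintegral_abs_rpow_lt_top_of_lt_sSup [IsFiniteMeasure μ] {θ : ℝ}
    (hθ : ENNReal.ofReal θ = sSup (ENNReal.ofReal '' {r : ℝ | 0 ≤ r ∧
      (∫⁻ ω, ENNReal.ofReal (|Z ω| ^ r) ∂μ) < ⊤})) (hs : 0 ≤ s) (hsθ : s < θ) :
    ∫⁻ ω, ENNReal.ofReal (|Z ω| ^ s) ∂μ < ⊤ := by
  have hlt := (ENNReal.ofReal_lt_ofReal_iff (hs.trans_lt hsθ)).2 hsθ
  rw [hθ] at hlt
  obtain ⟨_, ⟨t, ⟨-, ht⟩, rfl⟩, hst⟩ := lt_sSup_iff.1 hlt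
  exact lintegral_abs_rpow_lt_top_of_le hs ((ENNReal.ofReal_lt_ofReal_iff_of_nonneg hs).1 hst).le ht

end moments

lemma tendsto_measure_le_abs_sub_iff {Ω ι : Type*} [MeasurableSpace Ω] {μ : Measure Ω}
    {l : Filter ι} {f : ι → Ω → ℝ} {a ε : ℝ} :
    Tendsto (fun i => μ {ω | ε ≤ |f i ω - a|}) l (𝓝 0) ↔
      Tendsto (fun i => μ {ω | a + ε ≤ f i ω}) l (𝓝 0) ∧
        Tendsto (fun i => μ {ω | f i ω ≤ a - ε}) l (𝓝 0) := by
  have hsub (i : ι) :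
      {ω | ε ≤ |f i ω - a|} = {ω | a + ε ≤ f i ω} ∪ {ω | f i ω ≤ a - ε} := by
    ext ω
    simp only [Set.mem_union, Set.mem_ofPred_eq, le_abs']
    grind
  simp only [hsub]
  refine ⟨fun h => ⟨?_, ?_⟩, fun ⟨hup, hlow⟩ => ?_⟩
  · exact tendsto_of_tendsto_of_tendsto_of_le_of_le tendsto_const_nhds h (fun _ => zero_le)
      fun _ => measure_mono Set.subset_union_left
  · exact tendsto_of_tendsto_of_tendsto_of_le_of_le tendsto_const_nhds h (fun _ => zero_le)
      fun _ => measure_mono Set.subset_union_right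
  · exact tendsto_of_tendsto_of_tendsto_of_le_of_le tendsto_const_nhds
      (by simpa using hup.add hlow) (fun _ => zero_le) fun _ => measure_union_le _ _

section estimator

variable {Ω : Type*} [MeasurableSpace Ω] {μ : Measure Ω} [IsProbabilityMeasure μ]
  {Y : ℕ → Ω → ℝ} {c : ℝ}

lemma tendsto_measure_le_thetaHat (hindep : iIndepFun Y μ)
    (hident : ∀ k, IdentDistrib (Y k) (Y 0) μ μ) (hc : 0 < c)
    (htail : Tendsto (fun x : ℝ => x ^ c * μ.real {ω | x < Y 0 ω}) atTop atTop) :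
    Tendsto (fun n : ℕ => μ {ω | c ≤ thetaHat Y n ω}) atTop (𝓝 0) := by
  set x : ℕ → ℝ := fun n => Real.exp (Log n / c)
  have hx : ∀ n : ℕ, 3 ≤ n → x n ^ c = n := fun n hn => by
    rw [← Real.exp_mul, div_mul_cancel₀ _ hc.ne', Log_natCast_of_three_le hn,
      Real.exp_log (by positivity)]
  have hxtop : Tendsto x atTop atTop := Real.tendsto_exp_atTop.comp
    ((tendsto_Log_atTop.comp tendsto_natCast_atTop_atTop).atTop_div_const hc)
  have hexp :
      Tendsto (fun n : ℕ => Real.exp (-(n * μ.real {ω | x n < Y 0 ω}))) atTop (𝓝 0) := by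
    refine Real.tendsto_exp_atBot.comp
      (tendsto_neg_atTop_atBot.comp ((htail.comp hxtop).congr' ?_))
    filter_upwards [eventually_ge_atTop 3] with n hn
    simp only [Function.comp_apply, hx n hn]
  rw [← ENNReal.tendsto_toReal_zero_iff]
  refine tendsto_of_tendsto_of_tendsto_of_le_of_le' tendsto_const_nhds hexp
    (Eventually.of_forall fun n => ENNReal.toReal_nonneg) ?_
  filter_upwards [eventually_ne_atTop 0] with n hn
  calc μ.real {ω | c ≤ thetaHat Y n ω} ≤ μ.real {ω | pmax Y n ω ≤ x n} :=
        measureReal_mono fun ω => pmax_le_of_le_thetaHat hc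
    _ ≤ _ := measureReal_pmax_le_le_exp hindep hident hn _

lemma tendsto_measure_thetaHat_le (hident : ∀ k, IdentDistrib (Y k) (Y 0) μ μ) (hc : 0 < c)
    {s : ℝ} (hcs : c < s) (hmom : ∫⁻ ω, ENNReal.ofReal (Y 0 ω ^ s) ∂μ < ⊤) :
    Tendsto (fun n : ℕ => μ {ω | thetaHat Y n ω ≤ c}) atTop (𝓝 0) := by
  set C := (∫⁻ ω, ENNReal.ofReal (Y 0 ω ^ s) ∂μ).toReal
  have hpow : Tendsto (fun n : ℕ => C * (n : ℝ) ^ (-(s / c - 1))) atTop (𝓝 0) := by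
    simpa using ((tendsto_rpow_neg_atTop (sub_pos.2 ((one_lt_div hc).2 hcs))).comp
      tendsto_natCast_atTop_atTop).const_mul C
  rw [← ENNReal.tendsto_toReal_zero_iff]
  refine tendsto_of_tendsto_of_tendsto_of_le_of_le' tendsto_const_nhds hpow
    (Eventually.of_forall fun n => ENNReal.toReal_nonneg) ?_
  filter_upwards [eventually_ge_atTop 3,
    (tendsto_Log_atTop.comp tendsto_natCast_atTop_atTop).eventually_gt_atTop c] with n hn hcn
  have hn0 : (0 : ℝ) < n := by positivity
  have hy : Real.exp (Log n / c) ^ s = (n : ℝ) ^ (s / c) := by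
    rw [← Real.exp_mul, Log_natCast_of_three_le hn, Real.rpow_def_of_pos hn0]
    ring_nf
  calc μ.real {ω | thetaHat Y n ω ≤ c}
      ≤ μ.real {ω | Real.exp (Log n / c) ≤ pmax Y n ω} :=
        measureReal_mono fun ω => exp_le_pmax_of_thetaHat_le hc hcn
    _ ≤ n * μ.real {ω | Real.exp (Log n / c) ≤ Y 0 ω} :=
        measureReal_le_pmax_le hident (by omega) _
    _ ≤ n * (C / (n : ℝ) ^ (s / c)) := by
        gcongr
        rw [← hy]
        exact measureReal_le_le_lintegral_rpow_div (hident 0).aemeasurable_fst (hc.trans hcs).le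
          hmom (Real.exp_pos _)
    _ = C * (n : ℝ) ^ (-(s / c - 1)) := by
        rw [neg_sub, Real.rpow_sub hn0, Real.rpow_one]
        ring

lemma exists_pos_eventually_le_rpow_mul_tail (hindep : iIndepFun Y μ)
    (hident : ∀ k, IdentDistrib (Y k) (Y 0) μ μ) (hc : 0 < c)
    (h : Tendsto (fun n : ℕ => μ {ω | c ≤ thetaHat Y n ω}) atTop (𝓝 0)) :
    ∃ δ > 0, ∀ᶠ x : ℝ in atTop, δ ≤ x ^ c * μ.real {ω | x < Y 0 ω} := by
  refine ⟨1 / 4, by norm_num, ?_⟩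
  set n : ℝ → ℕ := fun x => ⌈x ^ c⌉₊
  have hn : Tendsto n atTop atTop := tendsto_nat_ceil_atTop.comp (tendsto_rpow_atTop hc)
  have hsmall : ∀ᶠ x : ℝ in atTop, μ.real {ω | c ≤ thetaHat Y (n x) ω} < 1 / 2 :=
    (((ENNReal.tendsto_toReal_zero_iff (by finiteness)).2 h).comp hn).eventually_lt_const
      (by norm_num)
  filter_upwards [hsmall, eventually_ge_atTop (Real.exp 1), hn.eventually_ge_atTop 3]
    with x hsmall hx hn3
  have hx0 : 0 < x := (Real.exp_pos 1).trans_le hx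
  have hxc : 1 ≤ x ^ c := Real.one_le_rpow (by linarith [Real.add_one_le_exp 1]) hc.le
  have hnx : x ^ c ≤ n x := Nat.le_ceil _
  have hnx' : (n x : ℝ) ≤ 2 * x ^ c :=
    (Nat.ceil_lt_add_one (by positivity)).le.trans (by linarith)
  have hlog : c * Log x ≤ Log (n x) := by
    rw [Log_of_exp_one_le hx, Log_natCast_of_three_le hn3, ← Real.log_rpow hx0]
    exact Real.log_le_log (by positivity) hnx
  have hlower : 1 - n x * μ.real {ω | x < Y 0 ω} ≤ μ.real {ω | c ≤ thetaHat Y (n x) ω} :=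
    (one_sub_mul_le_measureReal_pmax_le hindep hident (by omega) x).trans
      (measureReal_mono fun ω hω => le_thetaHat_of_pmax_le hc.le hω hlog)
  nlinarith [mul_le_mul_of_nonneg_right hnx' (measureReal_nonneg (μ := μ) (s := {ω | x < Y 0 ω}))]

lemma tendsto_rpow_mul_tail_atTop (hindep : iIndepFun Y μ)
    (hident : ∀ k, IdentDistrib (Y k) (Y 0) μ μ) (hc : 0 < c) {r : ℝ} (hcr : c < r)
    (h : Tendsto (fun n : ℕ => μ {ω | c ≤ thetaHat Y n ω}) atTop (𝓝 0)) :
    Tendsto (fun x : ℝ => x ^ r * μ.real {ω | x < Y 0 ω}) atTop atTop := by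
  obtain ⟨δ, hδ, hev⟩ := exists_pos_eventually_le_rpow_mul_tail hindep hident hc h
  refine tendsto_atTop_mono' atTop ?_ ((tendsto_rpow_atTop (sub_pos.2 hcr)).atTop_mul_const hδ)
  filter_upwards [hev, eventually_gt_atTop 0] with x hx hx0
  calc x ^ (r - c) * δ ≤ x ^ (r - c) * (x ^ c * μ.real {ω | x < Y 0 ω}) := by gcongr
    _ = x ^ r * μ.real {ω | x < Y 0 ω} := by
        rw [← mul_assoc, ← Real.rpow_add hx0, sub_add_cancel]

end estimator

theorem stmt15_general {Ω : Type*} [MeasurableSpace Ω] (μ : Measure Ω) [IsProbabilityMeasure μ]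
    (X : ℕ → Ω → ℝ)
    (hindep : iIndepFun X μ)
    (hident : ∀ n, IdentDistrib (X n) (X 0) μ μ)
    (θ : ℝ)
    (hθ : ENNReal.ofReal θ = sSup (ENNReal.ofReal '' {r : ℝ | 0 ≤ r ∧
        (∫⁻ ω, ENNReal.ofReal (|X 0 ω| ^ r) ∂μ) < ⊤})) (hθ0 : 0 ≤ θ) :
    (∀ ε : ℝ, 0 < ε →
        Tendsto (fun n : ℕ =>
          μ {ω | ε ≤ |Log n / Log (pmax (fun k ω' => |X k ω'|) n ω) - θ|}) atTop (nhds 0)) ↔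
    (∀ r : ℝ, θ < r →
        Tendsto (fun x : ℝ => x ^ r * (μ {ω | |X 0 ω| > x}).toReal) atTop atTop) := by
  set Y : ℕ → Ω → ℝ := fun k ω => |X k ω|
  have hYindep : iIndepFun Y μ := hindep.comp (fun _ => abs) fun _ => measurable_abs
  have hYident : ∀ k, IdentDistrib (Y k) (Y 0) μ μ := fun k => (hident k).comp measurable_abs
  change
    (∀ ε : ℝ, 0 < ε → Tendsto (fun n : ℕ => μ {ω | ε ≤ |thetaHat Y n ω - θ|}) atTop (𝓝 0)) ↔
    ∀ r, θ < r → Tendsto (fun x : ℝ => x ^ r * μ.real {ω | x < Y 0 ω}) atTop atTop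
  refine ⟨fun hconv r hr => ?_,
    fun htail ε hε => tendsto_measure_le_abs_sub_iff.2 ⟨?_, ?_⟩⟩
  · exact tendsto_rpow_mul_tail_atTop hYindep hYident (by linarith)
      (by linarith : θ + (r - θ) / 2 < r)
      (tendsto_measure_le_abs_sub_iff.1 (hconv _ (by linarith))).1
  · exact tendsto_measure_le_thetaHat hYindep hYident (by linarith) (htail (θ + ε) (by linarith))
  · rcases le_or_gt θ ε with hθε | hθε
    · have hempty : ∀ n, {ω | thetaHat Y n ω ≤ θ - ε} = ∅ := fun n =>
        Set.eq_empty_of_forall_notMem fun ω hω =>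
          (thetaHat_pos Y n ω).not_ge (hω.trans (by linarith))
      simp [hempty]
    · exact tendsto_measure_thetaHat_le hYident (sub_pos.2 hθε)
        (by linarith : θ - ε < θ - ε / 2)
        (lintegral_abs_rpow_lt_top_of_lt_sSup hθ (by linarith) (by linarith))

theorem stmt15 {Ω : Type*} [MeasurableSpace Ω] (μ : Measure Ω) [IsProbabilityMeasure μ]
    (X : ℕ → Ω → ℝ) (hmeas : ∀ n, Measurable (X n))
    (hindep : iIndepFun X μ)
    (hident : ∀ n, IdentDistrib (X n) (X 0) μ μ)
    (θ : ℝ)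
    (hθ : ENNReal.ofReal θ = sSup (ENNReal.ofReal '' {r : ℝ | 0 ≤ r ∧
        (∫⁻ ω, ENNReal.ofReal (|X 0 ω| ^ r) ∂μ) < ⊤})) (hθ0 : 0 ≤ θ) :
    (∀ ε : ℝ, 0 < ε →
        Tendsto (fun n : ℕ =>
          μ {ω | ε ≤ |Log n / Log (pmax (fun k ω' => |X k ω'|) n ω) - θ|}) atTop (nhds 0)) ↔
    (∀ r : ℝ, θ < r →
        Tendsto (fun x : ℝ => x ^ r * (μ {ω | |X 0 ω| > x}).toReal) atTop atTop) :=
  stmt15_general μ X hindep hident θ hθ hθ0
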